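/- arXiv:2209.04826 — 2 statements merged into one kernel-verified Lean document; each statement's English description precedes it below -/
import Mathlib

section
/- Let m ≥ 1, let A be a (2m+2)×(2m+2) complex matrix, let P be an invertible (2m+2)×(2m+2) complex matrix, and let φ, ψ : ℝ×ℝ → ℂ^{2m+2} be any functions. Define the quasi double Wronskians f(A;φ,ψ) = det(A⁰φ,…,A^mφ, (−A)⁰ψ,…,(−A)^mψ), g(A;φ,ψ) = 2·det(A⁰φ,…,A^{m+1}φ, (−A)⁰ψ,…,(−A)^{m−1}ψ), h(A;φ,ψ) = −2·det(A⁰φ,…,A^{m−1}φ, (−A)⁰ψ,…,(−A)^{m+1}ψ). Then for à = P A P⁻¹, φ' = P φ, ψ' = P ψ, one has f(Ã;φ',ψ') = det(P)·f(A;φ,ψ), g(Ã;φ',ψ') = det(P)·g(A;φ,ψ), and h(Ã;φ',ψ') = det(P)·h(A;φ,ψ); consequently, at every point where f(A;φ,ψ) ≠ 0, q₀ + g(Ã;φ',ψ')/f(Ã;φ',ψ') = q₀ + g(A;φ,ψ)/f(A;φ,ψ) and r₀ + h(Ã;φ',ψ')/f(Ã;φ',ψ') = r₀ + h(A;φ,ψ)/f(A;φ,ψ)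 for any functions q₀, r₀. Hence a matrix A and any matrix similar to it lead to the same solution of the AKNS system through the transformation q = q₀ + g/f, r = r₀ + h/f. -/
open Matrix Complex

noncomputable section

/-- The quasi double Wronskian `f(A;φ,ψ) = |A⁰φ,…,A^mφ ; (−A)⁰ψ,…,(−A)^mψ|`. -/
def fDet (m : ℕ) (A : Matrix (Fin (2*m+2)) (Fin (2*m+2)) ℂ)
    (v w : Fin (2*m+2) → ℂ) : ℂ :=
  Matrix.det (Matrix.of fun i j : Fin (2*m+2) =>
    if (j:ℕ) < m+1 then (A^(j:ℕ)).mulVec v i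
    else ((-A)^((j:ℕ)-(m+1))).mulVec w i)

/-- The quasi double Wronskian `g(A;φ,ψ) = 2 |A⁰φ,…,A^{m+1}φ ; (−A)⁰ψ,…,(−A)^{m−1}ψ|`. -/
def gDet (m : ℕ) (A : Matrix (Fin (2*m+2)) (Fin (2*m+2)) ℂ)
    (v w : Fin (2*m+2) → ℂ) : ℂ :=
  2 * Matrix.det (Matrix.of fun i j : Fin (2*m+2) =>
    if (j:ℕ) < m+2 then (A^(j:ℕ)).mulVec v i
    else ((-A)^((j:ℕ)-(m+2))).mulVec w i)

/-- The quasi double Wronskian `h(A;φ,ψ) = −2 |A⁰φ,…,A^{m−1}φ ; (−A)⁰ψ,…,(−A)^{m+1}ψ|`. -/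
def hDet (m : ℕ) (A : Matrix (Fin (2*m+2)) (Fin (2*m+2)) ℂ)
    (v w : Fin (2*m+2) → ℂ) : ℂ :=
  -2 * Matrix.det (Matrix.of fun i j : Fin (2*m+2) =>
    if (j:ℕ) < m then (A^(j:ℕ)).mulVec v i
    else ((-A)^((j:ℕ)-m)).mulVec w i)

/-!
If `P * A = B * P` then `P * A ^ k = B ^ k * P` and `P * (-A) ^ k = (-B) ^ k * P`, so every column
`A ^ k φ`, `(-A) ^ k ψ` of a double Wronskian is carried by `P` to the corresponding column for
`B`, `Pφ`, `Pψ`. The whole Wronskian matrix is thus multiplied on the left by `P`, and its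
determinant by `det P`, which cancels in the quotients `g / f` and `h / f`.
-/

section DoubleWronskian

variable {R : Type*} [CommRing R] {N : ℕ}

/-- `fDet`, `gDet`, `hDet` are `1`, `2`, `-2` times its determinant for `c = m+1, m+2, m`. -/
def doubleWronskianMatrix (c : ℕ) (A : Matrix (Fin N) (Fin N) R) (v w : Fin N → R) :
    Matrix (Fin N) (Fin N) R :=
  of fun i j => if (j : ℕ) < c then (A ^ (j : ℕ) *ᵥ v) i else ((-A) ^ ((j : ℕ) - c) *ᵥ w) i

theorem doubleWronskianMatrix_of_semiconjBy {P A B : Matrix (Fin N) (Fin N) R}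
    (h : SemiconjBy P A B) (c : ℕ) (v w : Fin N → R) :
    doubleWronskianMatrix c B (P *ᵥ v) (P *ᵥ w) = P * doubleWronskianMatrix c A v w := by
  ext i j
  show _ = (P *ᵥ fun k => doubleWronskianMatrix c A v w k j) i
  by_cases hj : (j : ℕ) < c
  · simp only [doubleWronskianMatrix, of_apply, hj, if_true, mulVec_mulVec, (h.pow_right _).eq]
  · simp only [doubleWronskianMatrix, of_apply, hj, if_false, mulVec_mulVec,
      (h.neg_right.pow_right _).eq]

theorem det_doubleWronskianMatrix_of_semiconjBy {P A B : Matrix (Fin N) (Fin N) R}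
    (h : SemiconjBy P A B) (c : ℕ) (v w : Fin N → R) :
    (doubleWronskianMatrix c B (P *ᵥ v) (P *ᵥ w)).det
      = P.det * (doubleWronskianMatrix c A v w).det := by
  rw [doubleWronskianMatrix_of_semiconjBy h, det_mul]

theorem Matrix.semiconjBy_mul_mul_nonsing_inv {P : Matrix (Fin N) (Fin N) R} (hP : IsUnit P)
    (A : Matrix (Fin N) (Fin N) R) : SemiconjBy P A (P * A * P⁻¹) :=
  (nonsing_inv_mul_cancel_right P (P * A) ((isUnit_iff_isUnit_det P).mp hP)).symm

end DoubleWronskian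

section QuasiDoubleWronskian

variable {m : ℕ} {P A B : Matrix (Fin (2*m+2)) (Fin (2*m+2)) ℂ}

theorem fDet_of_semiconjBy (h : SemiconjBy P A B) (v w : Fin (2*m+2) → ℂ) :
    fDet m B (P *ᵥ v) (P *ᵥ w) = P.det * fDet m A v w :=
  det_doubleWronskianMatrix_of_semiconjBy h (m + 1) v w

theorem gDet_of_semiconjBy (h : SemiconjBy P A B) (v w : Fin (2*m+2) → ℂ) :
    gDet m B (P *ᵥ v) (P *ᵥ w) = P.det * gDet m A v w := by
  rw [gDet, gDet, ← doubleWronskianMatrix, ← doubleWronskianMatrix,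
    det_doubleWronskianMatrix_of_semiconjBy h]
  ring

theorem hDet_of_semiconjBy (h : SemiconjBy P A B) (v w : Fin (2*m+2) → ℂ) :
    hDet m B (P *ᵥ v) (P *ᵥ w) = P.det * hDet m A v w := by
  rw [hDet, hDet, ← doubleWronskianMatrix, ← doubleWronskianMatrix,
    det_doubleWronskianMatrix_of_semiconjBy h]
  ring

end QuasiDoubleWronskian

theorem similar_matrices_give_same_solution_general
    (m : ℕ)
    (A P : Matrix (Fin (2*m+2)) (Fin (2*m+2)) ℂ) (hP : IsUnit P)
    (φ ψ : ℝ → ℝ → Fin (2*m+2) → ℂ)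
    (q₀ r₀ : ℝ → ℝ → ℂ) :
    ∀ x t,
      (fDet m (P * A * P⁻¹) (P.mulVec (φ x t)) (P.mulVec (ψ x t))
          = P.det * fDet m A (φ x t) (ψ x t))
      ∧ (gDet m (P * A * P⁻¹) (P.mulVec (φ x t)) (P.mulVec (ψ x t))
          = P.det * gDet m A (φ x t) (ψ x t))
      ∧ (hDet m (P * A * P⁻¹) (P.mulVec (φ x t)) (P.mulVec (ψ x t))
          = P.det * hDet m A (φ x t) (ψ x t))
      ∧ (fDet m A (φ x t) (ψ x t) ≠ 0 →
          (q₀ x t + gDet m (P * A * P⁻¹) (P.mulVec (φ x t)) (P.mulVec (ψ x t))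
              / fDet m (P * A * P⁻¹) (P.mulVec (φ x t)) (P.mulVec (ψ x t))
            = q₀ x t + gDet m A (φ x t) (ψ x t) / fDet m A (φ x t) (ψ x t))
          ∧ (r₀ x t + hDet m (P * A * P⁻¹) (P.mulVec (φ x t)) (P.mulVec (ψ x t))
              / fDet m (P * A * P⁻¹) (P.mulVec (φ x t)) (P.mulVec (ψ x t))
            = r₀ x t + hDet m A (φ x t) (ψ x t) / fDet m A (φ x t) (ψ x t))) := by
  intro x t
  have hconj := Matrix.semiconjBy_mul_mul_nonsing_inv hP A
  have hf := fDet_of_semiconjBy hconj (φ x t) (ψ x t)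
  have hg := gDet_of_semiconjBy hconj (φ x t) (ψ x t)
  have hh := hDet_of_semiconjBy hconj (φ x t) (ψ x t)
  have hdet : P.det ≠ 0 := ((isUnit_iff_isUnit_det P).mp hP).ne_zero
  refine ⟨hf, hg, hh, fun _ => ⟨?_, ?_⟩⟩
  · rw [hf, hg, mul_div_mul_left _ _ hdet]
  · rw [hf, hh, mul_div_mul_left _ _ hdet]

/-- **Similarity invariance of the quasi double Wronskian solutions.**
Under `Ã = P A P⁻¹`, `φ' = Pφ`, `ψ' = Pψ` the quasi double Wronskians `f, g, h`
all pick up the common factor `det P`; consequently wherever `f ≠ 0`,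
`q₀ + g/f` and `r₀ + h/f` are unchanged, i.e. a matrix `A` and any matrix
similar to it lead to the same solution of the AKNS system via `q = q₀ + g/f`,
`r = r₀ + h/f`. -/
theorem similar_matrices_give_same_solution
    (m : ℕ) (hm : 1 ≤ m)
    (A P : Matrix (Fin (2*m+2)) (Fin (2*m+2)) ℂ) (hP : IsUnit P)
    (φ ψ : ℝ → ℝ → Fin (2*m+2) → ℂ)
    (q₀ r₀ : ℝ → ℝ → ℂ) :
    ∀ x t,
      (fDet m (P * A * P⁻¹) (P.mulVec (φ x t)) (P.mulVec (ψ x t))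
          = P.det * fDet m A (φ x t) (ψ x t))
      ∧ (gDet m (P * A * P⁻¹) (P.mulVec (φ x t)) (P.mulVec (ψ x t))
          = P.det * gDet m A (φ x t) (ψ x t))
      ∧ (hDet m (P * A * P⁻¹) (P.mulVec (φ x t)) (P.mulVec (ψ x t))
          = P.det * hDet m A (φ x t) (ψ x t))
      ∧ (fDet m A (φ x t) (ψ x t) ≠ 0 →
          (q₀ x t + gDet m (P * A * P⁻¹) (P.mulVec (φ x t)) (P.mulVec (ψ x t))
              / fDet m (P * A * P⁻¹) (P.mulVec (φ x t)) (P.mulVec (ψ x t))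
            = q₀ x t + gDet m A (φ x t) (ψ x t) / fDet m A (φ x t) (ψ x t))
          ∧ (r₀ x t + hDet m (P * A * P⁻¹) (P.mulVec (φ x t)) (P.mulVec (ψ x t))
              / fDet m (P * A * P⁻¹) (P.mulVec (φ x t)) (P.mulVec (ψ x t))
            = r₀ x t + hDet m A (φ x t) (ψ x t) / fDet m A (φ x t) (ψ x t))) :=
  similar_matrices_give_same_solution_general m A P hP φ ψ q₀ r₀
end
end

section
/- (Peregrine soliton / first order rogue wave of the focusing NLS equation.) Let s₀, s₁ ∈ ℝ with s₀ ≠ 0, and set x̃ = x + (s₀ − 2s₁)/(2s₀). Define q : ℝ×ℝ → ℂ by q(x,t) = −(1 + (4it − 1)/(x̃² + 4t² + 1/4)) · e^{−2it}. Then q is smooth on ℝ×ℝ and satisfies the focusing NLS equation i q_t = q_xx + 2 |q|² q everywhere. Moreover, |q(x,t)| ≤ 3 for all (x,t), with equality exactly at (x,t) = (−(s₀ − 2s₁)/(2s₀), 0), so the maximum amplitude is three times the height of the background |e^{−2it}| = 1. -/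
open Complex

noncomputable section

/-- partial derivative in the first (space) variable -/
def px (f : ℝ → ℝ → ℂ) : ℝ → ℝ → ℂ := fun x t => deriv (fun x' => f x' t) x

/-- partial derivative in the second (time) variable -/
def pt (f : ℝ → ℝ → ℂ) : ℝ → ℝ → ℂ := fun x t => deriv (fun t' => f x t') t

namespace PerAux

def NN (t : ℝ) : ℂ := 4*Complex.I*(t:ℂ) - 1
def DD (c x t : ℝ) : ℂ := ((x:ℂ)+(c:ℂ))^2 + 4*(t:ℂ)^2 + 1/4
def EE (t : ℝ) : ℂ := Complex.exp (-(2*Complex.I*(t:ℂ)))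
def Q (c x t : ℝ) : ℂ := -(1 + NN t / DD c x t) * EE t
def Q1 (c x t : ℝ) : ℂ := (2 * NN t * ((x:ℂ)+(c:ℂ)) / (DD c x t)^2) * EE t
def Q2 (c x t : ℝ) : ℂ := (2 * NN t * (DD c x t - 4*((x:ℂ)+(c:ℂ))^2) / (DD c x t)^3) * EE t
def QT (c x t : ℝ) : ℂ :=
  (2*Complex.I*(1 + NN t/DD c x t)
    - (4*Complex.I*DD c x t - 8*(t:ℂ)*NN t)/(DD c x t)^2) * EE t

lemma DD_real (c x t : ℝ) : DD c x t = (((x+c)^2+4*t^2+1/4 : ℝ) : ℂ) := by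
  unfold DD; push_cast; ring

lemma DD_ne (c x t : ℝ) : DD c x t ≠ 0 := by
  rw [DD_real]
  exact_mod_cast (by positivity : ((x+c)^2+4*t^2+1/4 : ℝ) ≠ 0)

lemma hasDerivAt_Q_x (c x t : ℝ) :
    HasDerivAt (fun x' : ℝ => Q c x' t) (Q1 c x t) x := by
  have hne : ((x:ℂ)+(c:ℂ))^2 + 4*(t:ℂ)^2 + 1/4 ≠ 0 := DD_ne c x t
  have hden : HasDerivAt (fun z : ℂ => (z+(c:ℂ))^2 + 4*(t:ℂ)^2 + 1/4)
      (2*((x:ℂ)+(c:ℂ))) (x:ℂ) := by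
    have h1 : HasDerivAt (fun z : ℂ => (z+(c:ℂ))^2) (2*((x:ℂ)+(c:ℂ))) (x:ℂ) := by
      have := ((hasDerivAt_id ((x:ℂ))).add_const (c:ℂ)).pow 2
      exact this.congr_deriv (by simp)
    simpa using (h1.add_const (4*(t:ℂ)^2)).add_const (1/4)
  have h4 := (((((hasDerivAt_const ((x:ℂ)) (NN t)).div hden hne).const_add
      (1:ℂ)).neg).mul_const (EE t)).comp_ofReal
  have h5 : HasDerivAt (fun x' : ℝ => Q c x' t)
      (-((0 * ((((x:ℂ)+(c:ℂ))^2 + 4*(t:ℂ)^2 + 1/4))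
          - NN t * (2*((x:ℂ)+(c:ℂ)))) / (((x:ℂ)+(c:ℂ))^2 + 4*(t:ℂ)^2 + 1/4)^2)
        * EE t) x := h4
  convert h5 using 1
  unfold Q1 DD
  field_simp
  ring

lemma hasDerivAt_Q1_x (c x t : ℝ) :
    HasDerivAt (fun x' : ℝ => Q1 c x' t) (Q2 c x t) x := by
  have hne : ((x:ℂ)+(c:ℂ))^2 + 4*(t:ℂ)^2 + 1/4 ≠ 0 := DD_ne c x t
  have hne2 : (((x:ℂ)+(c:ℂ))^2 + 4*(t:ℂ)^2 + 1/4)^2 ≠ 0 := pow_ne_zero _ hne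
  have hden : HasDerivAt (fun z : ℂ => (z+(c:ℂ))^2 + 4*(t:ℂ)^2 + 1/4)
      (2*((x:ℂ)+(c:ℂ))) (x:ℂ) := by
    have h1 : HasDerivAt (fun z : ℂ => (z+(c:ℂ))^2) (2*((x:ℂ)+(c:ℂ))) (x:ℂ) := by
      have := ((hasDerivAt_id ((x:ℂ))).add_const (c:ℂ)).pow 2
      exact this.congr_deriv (by simp)
    simpa using (h1.add_const (4*(t:ℂ)^2)).add_const (1/4)
  have hden2 : HasDerivAt (fun z : ℂ => ((z+(c:ℂ))^2 + 4*(t:ℂ)^2 + 1/4)^2)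
      (2 * (((x:ℂ)+(c:ℂ))^2 + 4*(t:ℂ)^2 + 1/4) * (2*((x:ℂ)+(c:ℂ)))) (x:ℂ) := by
    have := hden.pow 2
    exact this.congr_deriv (by simp)
  have hnum : HasDerivAt (fun z : ℂ => 2 * NN t * (z+(c:ℂ))) (2 * NN t) (x:ℂ) := by
    have := ((hasDerivAt_id ((x:ℂ))).add_const (c:ℂ)).const_mul (2 * NN t)
    simpa using this
  have h4 := ((hnum.div hden2 hne2).mul_const (EE t)).comp_ofReal
  have h5 : HasDerivAt (fun x' : ℝ => Q1 c x' t)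
      ((2 * NN t * ((((x:ℂ)+(c:ℂ))^2 + 4*(t:ℂ)^2 + 1/4)^2)
          - 2 * NN t * ((x:ℂ)+(c:ℂ))
            * (2 * (((x:ℂ)+(c:ℂ))^2 + 4*(t:ℂ)^2 + 1/4) * (2*((x:ℂ)+(c:ℂ)))))
        / ((((x:ℂ)+(c:ℂ))^2 + 4*(t:ℂ)^2 + 1/4)^2)^2 * EE t) x := h4
  convert h5 using 1
  unfold Q2 DD
  rw [div_mul_eq_mul_div, div_mul_eq_mul_div, div_eq_div_iff (pow_ne_zero 3 hne) (pow_ne_zero 2 hne2)]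
  ring

lemma hasDerivAt_Q_t (c x t : ℝ) :
    HasDerivAt (fun t' : ℝ => Q c x t') (QT c x t) t := by
  have hne : ((x:ℂ)+(c:ℂ))^2 + 4*(t:ℂ)^2 + 1/4 ≠ 0 := DD_ne c x t
  have hN : HasDerivAt (fun w : ℂ => 4*Complex.I*w - 1) (4*Complex.I) (t:ℂ) := by
    have := ((hasDerivAt_id ((t:ℂ))).const_mul (4*Complex.I)).sub_const (1:ℂ)
    simpa using this
  have hden : HasDerivAt (fun w : ℂ => ((x:ℂ)+(c:ℂ))^2 + 4*w^2 + 1/4)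
      (8*(t:ℂ)) (t:ℂ) := by
    have h1 : HasDerivAt (fun w : ℂ => 4*w^2) (8*(t:ℂ)) (t:ℂ) := by
      have := (hasDerivAt_pow 2 ((t:ℂ))).const_mul (4:ℂ)
      exact this.congr_deriv (by simp; ring)
    simpa using (h1.const_add (((x:ℂ)+(c:ℂ))^2)).add_const (1/4)
  have hexp : HasDerivAt (fun w : ℂ => Complex.exp (-(2*Complex.I*w)))
      (Complex.exp (-(2*Complex.I*(t:ℂ))) * (-(2*Complex.I))) (t:ℂ) := by
    have h1 : HasDerivAt (fun w : ℂ => -(2*Complex.I*w)) (-(2*Complex.I)) (t:ℂ) := by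
      have := ((hasDerivAt_id ((t:ℂ))).const_mul (2*Complex.I)).neg
      exact this.congr_deriv (by simp)
    exact h1.cexp
  have h4 := ((((hN.div hden hne).const_add (1:ℂ)).neg).mul hexp).comp_ofReal
  have h5 : HasDerivAt (fun t' : ℝ => Q c x t')
      (-((4*Complex.I * (((x:ℂ)+(c:ℂ))^2 + 4*(t:ℂ)^2 + 1/4)
            - (4*Complex.I*(t:ℂ) - 1) * (8*(t:ℂ)))
          / (((x:ℂ)+(c:ℂ))^2 + 4*(t:ℂ)^2 + 1/4)^2)
        * Complex.exp (-(2*Complex.I*(t:ℂ)))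
        + -(1 + (4*Complex.I*(t:ℂ) - 1) / (((x:ℂ)+(c:ℂ))^2 + 4*(t:ℂ)^2 + 1/4))
          * (Complex.exp (-(2*Complex.I*(t:ℂ))) * (-(2*Complex.I)))) t := h4
  convert h5 using 1
  unfold QT DD NN EE
  field_simp
  ring

lemma conj_Q (c x t : ℝ) :
    (starRingEnd ℂ) (Q c x t)
      = -(1 + (-(4*Complex.I*(t:ℂ))-1)/DD c x t) * Complex.exp (2*Complex.I*(t:ℂ)) := by
  unfold Q NN EE
  rw [DD_real]
  simp [map_mul, map_neg, map_add, map_div₀, map_sub, map_one, map_ofNat,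
    Complex.conj_ofReal, Complex.conj_I, ← Complex.exp_conj]

lemma normSq_Q (c x t : ℝ) :
    Complex.normSq (Q c x t)
      = (((x+c)^2+4*t^2+1/4 - 1)^2 + 16*t^2) / ((x+c)^2+4*t^2+1/4)^2 := by
  have hD := DD_ne c x t
  have hw' : 1 + NN t / DD c x t = (DD c x t + NN t)/DD c x t := by
    field_simp
  have hsum : DD c x t + NN t
      = ((((x+c)^2+4*t^2+1/4 - 1) : ℝ):ℂ) + ((4*t : ℝ):ℂ)*Complex.I := by
    rw [DD_real]; unfold NN; push_cast; ring
  have hE : Complex.normSq (EE t) = 1 := by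
    unfold EE
    rw [Complex.normSq_eq_norm_sq, Complex.norm_exp]
    simp
  unfold Q
  rw [map_mul, hE, mul_one, Complex.normSq_neg, hw', map_div₀, hsum, DD_real,
    Complex.normSq_add_mul_I, Complex.normSq_ofReal]
  ring

set_option maxHeartbeats 400000 in
lemma contDiff_Q (c : ℝ) : ContDiff ℝ (⊤:ℕ∞) (fun p : ℝ×ℝ => Q c p.1 p.2) := by
  have hx : ContDiff ℝ (⊤:ℕ∞) (fun p : ℝ×ℝ => ((p.1:ℝ):ℂ)) :=
    Complex.ofRealCLM.contDiff.comp contDiff_fst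
  have ht : ContDiff ℝ (⊤:ℕ∞) (fun p : ℝ×ℝ => ((p.2:ℝ):ℂ)) :=
    Complex.ofRealCLM.contDiff.comp contDiff_snd
  have hD : ContDiff ℝ (⊤:ℕ∞) (fun p : ℝ×ℝ => DD c p.1 p.2) := by
    unfold DD
    exact (((hx.add contDiff_const).pow 2).add
      (contDiff_const.mul (ht.pow 2))).add contDiff_const
  have hN : ContDiff ℝ (⊤:ℕ∞) (fun p : ℝ×ℝ => NN p.2) := by
    unfold NN
    exact (contDiff_const.mul ht).sub contDiff_const
  have hE : ContDiff ℝ (⊤:ℕ∞) (fun p : ℝ×ℝ => EE p.2) := by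
    unfold EE
    exact ((contDiff_const.mul ht).neg).cexp
  have hinv : ContDiff ℝ (⊤:ℕ∞) (fun p : ℝ×ℝ => (DD c p.1 p.2)⁻¹) :=
    hD.inv (fun p => DD_ne c p.1 p.2)
  have hrw : (fun p : ℝ×ℝ => Q c p.1 p.2)
      = fun p => -(1 + NN p.2 * (DD c p.1 p.2)⁻¹) * EE p.2 := by
    funext p; unfold Q; rw [div_eq_mul_inv]
  rw [hrw]
  exact ((contDiff_const.add (hN.mul hinv)).neg).mul hE

lemma keyAlg (X T D : ℂ) (hrel : D = X^2+4*T^2+1/4) (hD : D ≠ 0) :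
    Complex.I * (2*Complex.I*(1 + (4*Complex.I*T-1)/D)
        - (4*Complex.I*D - 8*T*(4*Complex.I*T-1))/D^2)
    = 2*(4*Complex.I*T-1)*(D-4*X^2)/D^3
      + 2*(-(1 + (4*Complex.I*T-1)/D))^2*(-(1 + (-(4*Complex.I*T)-1)/D)) := by
  field_simp
  linear_combination ((-6:ℂ)*D^2 + (2:ℂ)*D^3 + (32:ℂ)*T^2 + (8:ℂ)*I*T*D^2
      + (-128:ℂ)*I*T^3) * Complex.I_sq
    + ((8:ℂ) + (-32:ℂ)*I*T) * hrel

end PerAux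

/-- **The Peregrine soliton (first order rogue wave) of the focusing NLS
equation.**  With `x̃ = x + (s₀ − 2s₁)/(2s₀)` (`s₀, s₁ ∈ ℝ`, `s₀ ≠ 0`), the
function `q(x,t) = −(1 + (4it − 1)/(x̃² + 4t² + 1/4))·e^{−2it}` is a smooth
solution of `i q_t = q_xx + 2|q|²q`, its amplitude satisfies `|q| ≤ 3`
everywhere, and `|q| = 3` exactly at `(x,t) = (−(s₀−2s₁)/(2s₀), 0)`:  the
maximal amplitude is three times the background height `|e^{−2it}| = 1`. -/


theorem peregrine_soliton_focusing_NLS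
    (s₀ s₁ : ℝ) (hs₀ : s₀ ≠ 0)
    (q : ℝ → ℝ → ℂ)
    (hq : ∀ x t, q x t =
      -(1 + (4*Complex.I*(t:ℂ) - 1) /
          (((x + (s₀ - 2*s₁)/(2*s₀))^2 + 4*t^2 + 1/4 : ℝ) : ℂ)) *
        Complex.exp (-(2*Complex.I*(t:ℂ)))) :
    (ContDiff ℝ (⊤:ℕ∞) fun p : ℝ × ℝ => q p.1 p.2)
    ∧ (∀ x t, Complex.I * pt q x t
        = px (px q) x t + 2 * ((‖q x t‖ : ℂ))^2 * q x t)
    ∧ (∀ x t, ‖q x t‖ ≤ 3)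
    ∧ (∀ x t, ‖q x t‖ = 3 ↔ x = -((s₀ - 2*s₁)/(2*s₀)) ∧ t = 0) := by
  open PerAux in
  set c : ℝ := (s₀ - 2*s₁)/(2*s₀) with hc
  have hq' : q = fun x t => PerAux.Q c x t := by
    funext x t
    rw [hq]
    unfold PerAux.Q PerAux.NN PerAux.EE
    rw [PerAux.DD_real]
  have sqrt9 : Real.sqrt 9 = 3 := by
    rw [show (9:ℝ) = 3^2 by norm_num, Real.sqrt_sq (by norm_num : (0:ℝ) ≤ 3)]
  refine ⟨?_, ?_, ?_, ?_⟩
  · rw [hq']; exact PerAux.contDiff_Q c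
  · intro x t
    have h2 : px (px q) x t = PerAux.Q2 c x t := by
      simp only [px]
      have hinner : (fun x' : ℝ => deriv (fun x'' => q x'' t) x')
          = fun x' : ℝ => PerAux.Q1 c x' t := by
        funext a
        rw [hq']
        exact (PerAux.hasDerivAt_Q_x c a t).deriv
      rw [hinner]
      exact (PerAux.hasDerivAt_Q1_x c x t).deriv
    have h1 : pt q x t = PerAux.QT c x t := by
      simp only [pt, hq']
      exact (PerAux.hasDerivAt_Q_t c x t).deriv
    rw [h1, h2, hq']
    simp only
    have habs : ((‖PerAux.Q c x t‖ : ℝ) : ℂ)^2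
        = PerAux.Q c x t * (starRingEnd ℂ) (PerAux.Q c x t) := by
      rw [Complex.mul_conj]
      norm_cast
      exact Complex.sq_norm _
    rw [habs, PerAux.conj_Q]
    have hEE : PerAux.EE t * Complex.exp (2*Complex.I*(t:ℂ)) = 1 := by
      unfold PerAux.EE
      rw [← Complex.exp_add, show -(2*Complex.I*(t:ℂ)) + 2*Complex.I*(t:ℂ) = 0 by ring,
        Complex.exp_zero]
    have hqc : PerAux.Q c x t
        * (-(1 + (-(4*Complex.I*(t:ℂ))-1)/PerAux.DD c x t) * Complex.exp (2*Complex.I*(t:ℂ)))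
        = -(1 + PerAux.NN t/PerAux.DD c x t) * -(1 + (-(4*Complex.I*(t:ℂ))-1)/PerAux.DD c x t) := by
      unfold PerAux.Q
      rw [show -(1 + PerAux.NN t / PerAux.DD c x t) * PerAux.EE t
            * (-(1 + (-(4*Complex.I*(t:ℂ))-1)/PerAux.DD c x t) * Complex.exp (2*Complex.I*(t:ℂ)))
          = -(1 + PerAux.NN t / PerAux.DD c x t)
            * -(1 + (-(4*Complex.I*(t:ℂ))-1)/PerAux.DD c x t)
            * (PerAux.EE t * Complex.exp (2*Complex.I*(t:ℂ))) from by ring, hEE, mul_one]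
    rw [hqc]
    simp only [PerAux.Q, PerAux.QT, PerAux.Q2, PerAux.NN]
    linear_combination (PerAux.EE t) * PerAux.keyAlg ((x:ℂ)+(c:ℂ)) (t:ℂ) (PerAux.DD c x t)
        rfl (PerAux.DD_ne c x t)
  · intro x t
    rw [hq']
    simp only
    rw [Complex.norm_def, PerAux.normSq_Q]
    have hr0 : (0:ℝ) < (x+c)^2+4*t^2+1/4 := by positivity
    have h9 : (((x+c)^2+4*t^2+1/4 - 1)^2 + 16*t^2) / ((x+c)^2+4*t^2+1/4)^2 ≤ 9 := by
      rw [div_le_iff₀ (by positivity)]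
      nlinarith [sq_nonneg ((x+c)^2+4*t^2), sq_nonneg (x+c), sq_nonneg t]
    calc Real.sqrt ((((x+c)^2+4*t^2+1/4 - 1)^2 + 16*t^2) / ((x+c)^2+4*t^2+1/4)^2)
        ≤ Real.sqrt 9 := Real.sqrt_le_sqrt h9
      _ = 3 := sqrt9
  · intro x t
    rw [hq']
    simp only
    rw [Complex.norm_def, PerAux.normSq_Q]
    have hr0 : (0:ℝ) < (x+c)^2+4*t^2+1/4 := by positivity
    constructor
    · intro h
      have hs0 : (0:ℝ) ≤ (((x+c)^2+4*t^2+1/4 - 1)^2 + 16*t^2) / ((x+c)^2+4*t^2+1/4)^2 := by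
        positivity
      have hs9 : (((x+c)^2+4*t^2+1/4 - 1)^2 + 16*t^2) / ((x+c)^2+4*t^2+1/4)^2 = 9 := by
        have := Real.sq_sqrt hs0
        rw [h] at this
        linarith [this]
      have hcl : ((x+c)^2+4*t^2+1/4 - 1)^2 + 16*t^2 = 9*((x+c)^2+4*t^2+1/4)^2 :=
        by
          have := (div_eq_iff (by positivity : ((x+c)^2+4*t^2+1/4)^2 ≠ 0)).mp hs9
          linarith [this]
      have h1 : 8*((x+c)^2+4*t^2)^2 + 6*(x+c)^2 + 8*t^2 = 0 := by
        linear_combination (-1 : ℝ) * hcl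
      have hu2 : (x+c)^2 = 0 := by
        have := sq_nonneg ((x+c)^2+4*t^2); have := sq_nonneg (x+c); have := sq_nonneg t
        linarith
      have ht2 : t^2 = 0 := by
        have := sq_nonneg ((x+c)^2+4*t^2); have := sq_nonneg (x+c); have := sq_nonneg t
        linarith
      have hu : x + c = 0 := by
        have := sq_eq_zero_iff.mp hu2; linarith [this]
      have ht : t = 0 := sq_eq_zero_iff.mp ht2
      exact ⟨by linarith, ht⟩
    · rintro ⟨hx, rfl⟩
      rw [hx]
      norm_num
end
end
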